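/- Let v₀, w₀ : ℝ → ℝ be continuous with support in [−a,a], and g : [0,T]×ℝ → ℝ continuous with g(t,x) = 0 whenever |x| > t + a. Define v(t,x) = v₀(x−t) + ∫₀ᵗ g(τ,x−t+τ)dτ and w(t,x) = w₀(x+t) + ∫₀ᵗ g(τ,x+t−τ)dτ. If moreover ∫_{−a−T}^{a+T}(w₀(y)−v₀(y))/2 dy = 0, then ∫_{−a−T}^{x} (w(t,y) − v(t,y))/2 dy = 0 for all (t,x) ∈ [0,T] × ℝ with |x| > t + a. -/
import Mathlib

open MeasureTheory intervalIntegral Set Filter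

/-- A continuous function vanishing for `c < |y|` (with `0 < c`) also vanishes
for `c ≤ |y|`. -/
lemma closed_support_aux {f : ℝ → ℝ} (hf : Continuous f) {c : ℝ} (hc : 0 < c)
    (h0 : ∀ y, c < |y| → f y = 0) : ∀ y, c ≤ |y| → f y = 0 := by
  intro y hy
  rcases lt_or_eq_of_le hy with h | h
  · exact h0 y h
  · -- c = |y|
    have l1 : Tendsto (fun s : ℝ => f (s * y)) (nhdsWithin 1 (Set.Ioi 1)) (nhds (f y)) := by
      have hcont : Continuous (fun s : ℝ => f (s * y)) :=
        hf.comp (continuous_id.mul continuous_const)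
      have := hcont.tendsto (1 : ℝ)
      rw [one_mul] at this
      exact this.mono_left nhdsWithin_le_nhds
    have l2 : Tendsto (fun s : ℝ => f (s * y)) (nhdsWithin 1 (Set.Ioi 1)) (nhds 0) := by
      apply Tendsto.congr' _ tendsto_const_nhds
      filter_upwards [self_mem_nhdsWithin] with s hs
      refine (h0 _ ?_).symm
      have hs1 : (1:ℝ) < s := hs
      have : |s * y| = s * c := by
        rw [abs_mul, abs_of_pos (by linarith : (0:ℝ) < s), ← h]
      rw [this]
      nlinarith
    exact tendsto_nhds_unique l1 l2

/-- Truncation: integral of a function vanishing outside `[c,d]`. -/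
lemma trunc_aux {h : ℝ → ℝ} (hc : Continuous h) {c d c' d' : ℝ} (h1 : c' ≤ c) (h2 : d ≤ d')
    (hz : ∀ y, y ≤ c ∨ d ≤ y → h y = 0) :
    (∫ y in c'..d', h y) = ∫ y in c..d, h y := by
  have i1 : IntervalIntegrable h volume c' c := hc.intervalIntegrable _ _
  have i2 : IntervalIntegrable h volume c d' := hc.intervalIntegrable _ _
  have i3 : IntervalIntegrable h volume c d := hc.intervalIntegrable _ _
  have i4 : IntervalIntegrable h volume d d' := hc.intervalIntegrable _ _
  have e1 : (∫ y in c'..c, h y) = 0 := by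
    rw [intervalIntegral.integral_congr (g := fun _ => (0:ℝ))
      (fun y hy => hz y (Or.inl (by simpa [max_eq_right h1] using hy.2)))]
    simp
  have e2 : (∫ y in d..d', h y) = 0 := by
    rw [intervalIntegral.integral_congr (g := fun _ => (0:ℝ))
      (fun y hy => hz y (Or.inr (by simpa [min_eq_left h2] using hy.1)))]
    simp
  calc (∫ y in c'..d', h y) = (∫ y in c'..c, h y) + ∫ y in c..d', h y :=
        (intervalIntegral.integral_add_adjacent_intervals i1 i2).symm
    _ = ∫ y in c..d', h y := by rw [e1, zero_add]
    _ = (∫ y in c..d, h y) + ∫ y in d..d', h y :=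
        (intervalIntegral.integral_add_adjacent_intervals i3 i4).symm
    _ = ∫ y in c..d, h y := by rw [e2, add_zero]

/-- Fubini for interval integrals of continuous functions. -/
lemma swap_aux {F : ℝ → ℝ → ℝ} (hF : Continuous (fun p : ℝ × ℝ => F p.1 p.2))
    {L X s t : ℝ} (hLX : L ≤ X) (hst : s ≤ t) :
    (∫ y in L..X, ∫ τ in s..t, F y τ) = ∫ τ in s..t, ∫ y in L..X, F y τ := by
  rw [intervalIntegral.integral_of_le hLX, intervalIntegral.integral_of_le hst]
  simp only [intervalIntegral.integral_of_le hLX, intervalIntegral.integral_of_le hst]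
  have hInt : Integrable (Function.uncurry F)
      ((volume.restrict (Set.Ioc L X)).prod (volume.restrict (Set.Ioc s t))) := by
    rw [Measure.prod_restrict]
    apply MeasureTheory.IntegrableOn.mono_set (t := Set.Icc L X ×ˢ Set.Icc s t)
    · have h2 : IntegrableOn (Function.uncurry F) (Set.Icc L X ×ˢ Set.Icc s t)
          (volume : Measure (ℝ × ℝ)) :=
        (hF.locallyIntegrable).integrableOn_isCompact (isCompact_Icc.prod isCompact_Icc)
      rwa [Measure.volume_eq_prod] at h2
    · exact Set.prod_mono Set.Ioc_subset_Icc_self Set.Ioc_subset_Icc_self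
  exact MeasureTheory.integral_integral_swap hInt

/-- support invariance of the fixed-point map: if v₀, w₀ are
supported in [−a,a], g vanishes for |x| > t + a, and ∫(w₀−v₀)/2 = 0, then
∫_{−a−T}^x (w(t,y)−v(t,y))/2 dy = 0 whenever |x| > t + a. -/
theorem stmt18 (T a : ℝ) (hT : 0 < T) (ha : 0 < a)
    (v₀ w₀ : ℝ → ℝ) (hv₀c : Continuous v₀) (hw₀c : Continuous w₀)
    (hv₀s : ∀ y : ℝ, y ∉ Set.Icc (-a) a → v₀ y = 0)
    (hw₀s : ∀ y : ℝ, y ∉ Set.Icc (-a) a → w₀ y = 0)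
    (g : ℝ → ℝ → ℝ) (hgc : Continuous (fun p : ℝ × ℝ => g p.1 p.2))
    (hgs : ∀ t x : ℝ, 0 ≤ t → t + a < |x| → g t x = 0)
    (v w : ℝ → ℝ → ℝ)
    (hv : ∀ t x, v t x = v₀ (x - t) + ∫ τ in (0:ℝ)..t, g τ (x - t + τ))
    (hw : ∀ t x, w t x = w₀ (x + t) + ∫ τ in (0:ℝ)..t, g τ (x + t - τ))
    (hint : (∫ y in (-a - T)..(a + T), (w₀ y - v₀ y) / 2) = 0) :
    ∀ t ∈ Set.Icc (0:ℝ) T, ∀ x : ℝ, t + a < |x| →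
      (∫ y in (-a - T)..x, (w t y - v t y) / 2) = 0 := by
  -- closed-support versions
  have hV : ∀ y, a ≤ |y| → v₀ y = 0 := by
    apply closed_support_aux hv₀c ha
    intro y hy
    apply hv₀s
    simp only [Set.mem_Icc, not_and_or, not_le]
    rcases lt_abs.mp hy with h | h
    · right; exact h
    · left; linarith
  have hW : ∀ y, a ≤ |y| → w₀ y = 0 := by
    apply closed_support_aux hw₀c ha
    intro y hy
    apply hw₀s
    simp only [Set.mem_Icc, not_and_or, not_le]
    rcases lt_abs.mp hy with h | h
    · right; exact h
    · left; linarith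
  have hG : ∀ τ x : ℝ, 0 ≤ τ → τ + a ≤ |x| → g τ x = 0 := by
    intro τ x hτ hx
    exact closed_support_aux (hgc.comp (continuous_const.prodMk continuous_id))
      (by linarith : (0:ℝ) < τ + a) (fun z hz => hgs τ z hτ hz) x hx
  intro t ht x hx
  obtain ⟨ht0, htT⟩ := ht
  -- continuity facts
  have hwc : Continuous (fun y => w t y) := by
    have he : (fun y => w t y)
        = fun y => w₀ (y + t) + ∫ τ in (0:ℝ)..t, g τ (y + t - τ) := funext (hw t)
    rw [he]
    apply Continuous.add
    · exact hw₀c.comp (continuous_id.add continuous_const)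
    · apply intervalIntegral.continuous_parametric_intervalIntegral_of_continuous'
        (f := fun y τ => g τ (y + t - τ))
      have hin : Continuous (fun p : ℝ × ℝ => ((p.2, p.1 + t - p.2) : ℝ × ℝ)) := by fun_prop
      exact hgc.comp hin
  have hvc : Continuous (fun y => v t y) := by
    have he : (fun y => v t y)
        = fun y => v₀ (y - t) + ∫ τ in (0:ℝ)..t, g τ (y - t + τ) := funext (hv t)
    rw [he]
    apply Continuous.add
    · exact hv₀c.comp (continuous_id.sub continuous_const)
    · apply intervalIntegral.continuous_parametric_intervalIntegral_of_continuous'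
        (f := fun y τ => g τ (y - t + τ))
      have hin : Continuous (fun p : ℝ × ℝ => ((p.2, p.1 - t + p.2) : ℝ × ℝ)) := by fun_prop
      exact hgc.comp hin
  rcases lt_abs.mp hx with hxr | hxl
  swap
  · -- case x < -(t+a): integrand vanishes on the whole interval
    have hxl' : x < -(t + a) := by linarith
    have hzero : ∀ y ∈ Set.uIcc (-a - T) x, (w t y - v t y) / 2 = (fun _ : ℝ => (0:ℝ)) y := by
      intro y hy
      have hyle : y ≤ -a - t := by
        have := hy.2
        have hmax : max (-a - T) x ≤ -a - t := by
          apply max_le <;> linarith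
        linarith [this.trans hmax]
      have h1 : w₀ (y + t) = 0 := hW _ (by rw [abs_of_nonpos (by linarith)]; linarith)
      have h2 : v₀ (y - t) = 0 := hV _ (by rw [abs_of_nonpos (by linarith)]; linarith)
      have h3 : (∫ τ in (0:ℝ)..t, g τ (y + t - τ)) = 0 := by
        rw [intervalIntegral.integral_congr (g := fun _ => (0:ℝ))]
        · simp
        · intro τ hτ
          rw [Set.uIcc_of_le ht0] at hτ
          exact hG τ _ hτ.1 (by rw [abs_of_nonpos (by linarith [hτ.1, hτ.2, ha])]; linarith [hτ.1, hτ.2, ha])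
      have h4 : (∫ τ in (0:ℝ)..t, g τ (y - t + τ)) = 0 := by
        rw [intervalIntegral.integral_congr (g := fun _ => (0:ℝ))]
        · simp
        · intro τ hτ
          rw [Set.uIcc_of_le ht0] at hτ
          exact hG τ _ hτ.1 (by rw [abs_of_nonpos (by linarith [hτ.1, hτ.2, ha])]; linarith [hτ.1, hτ.2, ha])
      simp [hw, hv, h1, h2, h3, h4]
    rw [intervalIntegral.integral_congr hzero]
    simp
  · -- case t + a < x
    set L : ℝ := -a - T with hL
    set X : ℝ := a + T + t with hXdef
    have hLX : L ≤ X := by simp only [hL, hXdef]; linarith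
    -- integrand vanishes to the right of a + t
    have hright : ∀ y : ℝ, a + t ≤ y → w t y - v t y = 0 := by
      intro y hy
      have h1 : w₀ (y + t) = 0 := hW _ (by rw [abs_of_nonneg (by linarith)]; linarith)
      have h2 : v₀ (y - t) = 0 := hV _ (by rw [abs_of_nonneg (by linarith)]; linarith)
      have h3 : (∫ τ in (0:ℝ)..t, g τ (y + t - τ)) = 0 := by
        rw [intervalIntegral.integral_congr (g := fun _ => (0:ℝ))]
        · simp
        · intro τ hτ
          rw [Set.uIcc_of_le ht0] at hτ
          exact hG τ _ hτ.1 (by rw [abs_of_nonneg (by linarith [hτ.1, hτ.2, ha])]; linarith [hτ.1, hτ.2, ha])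
      have h4 : (∫ τ in (0:ℝ)..t, g τ (y - t + τ)) = 0 := by
        rw [intervalIntegral.integral_congr (g := fun _ => (0:ℝ))]
        · simp
        · intro τ hτ
          rw [Set.uIcc_of_le ht0] at hτ
          exact hG τ _ hτ.1 (by rw [abs_of_nonneg (by linarith [hτ.1, hτ.2, ha])]; linarith [hτ.1, hτ.2, ha])
      rw [hw, hv, h1, h2, h3, h4]; ring
    -- reduce to integral up to X
    have hext : (∫ y in L..x, w t y - v t y) = ∫ y in L..X, w t y - v t y := by
      have hadj : (∫ y in L..x, w t y - v t y) + (∫ y in x..X, w t y - v t y)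
          = ∫ y in L..X, w t y - v t y :=
        intervalIntegral.integral_add_adjacent_intervals
          ((hwc.sub hvc).intervalIntegrable _ _) ((hwc.sub hvc).intervalIntegrable _ _)
      have hz : (∫ y in x..X, w t y - v t y) = 0 := by
        rw [intervalIntegral.integral_congr (g := fun _ => (0:ℝ))]
        · simp
        · intro y hy
          apply hright
          have : min x X ≤ y := hy.1
          have : a + t ≤ min x X := le_min (by linarith) (by simp only [hXdef]; linarith)
          linarith [hy.1]
      linarith [hadj, hz]
    -- the main computation for ∫ over [L, X]
    have hGw : (∫ y in L..X, ∫ τ in (0:ℝ)..t, g τ (y + t - τ))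
        = ∫ τ in (0:ℝ)..t, ∫ z in (-(a + τ))..(a + τ), g τ z := by
      have hin : Continuous (fun p : ℝ × ℝ => ((p.2, p.1 + t - p.2) : ℝ × ℝ)) := by fun_prop
      rw [swap_aux (F := fun y τ => g τ (y + t - τ)) (hgc.comp hin) hLX ht0]
      apply intervalIntegral.integral_congr
      intro τ hτ
      dsimp only
      rw [Set.uIcc_of_le ht0] at hτ
      obtain ⟨hτ0, hτt⟩ := hτ
      have e : (∫ y in L..X, g τ (y + t - τ)) = ∫ y in (L + (t - τ))..(X + (t - τ)), g τ y := by
        simp_rw [show ∀ y : ℝ, y + t - τ = y + (t - τ) by intro y; ring]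
        exact intervalIntegral.integral_comp_add_right (fun z => g τ z) (t - τ)
      rw [e]
      apply trunc_aux (hgc.comp (continuous_const.prodMk continuous_id))
      · simp only [hL]; linarith
      · simp only [hXdef]; linarith
      · intro y hy
        apply hG τ y hτ0
        rcases hy with h | h
        · rw [abs_of_nonpos (by linarith)]; linarith
        · rw [abs_of_nonneg (by linarith)]; linarith
    have hGv : (∫ y in L..X, ∫ τ in (0:ℝ)..t, g τ (y - t + τ))
        = ∫ τ in (0:ℝ)..t, ∫ z in (-(a + τ))..(a + τ), g τ z := by
      have hin : Continuous (fun p : ℝ × ℝ => ((p.2, p.1 - t + p.2) : ℝ × ℝ)) := by fun_prop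
      rw [swap_aux (F := fun y τ => g τ (y - t + τ)) (hgc.comp hin) hLX ht0]
      apply intervalIntegral.integral_congr
      intro τ hτ
      dsimp only
      rw [Set.uIcc_of_le ht0] at hτ
      obtain ⟨hτ0, hτt⟩ := hτ
      have e : (∫ y in L..X, g τ (y - t + τ)) = ∫ y in (L + (τ - t))..(X + (τ - t)), g τ y := by
        simp_rw [show ∀ y : ℝ, y - t + τ = y + (τ - t) by intro y; ring]
        exact intervalIntegral.integral_comp_add_right (fun z => g τ z) (τ - t)
      rw [e]
      apply trunc_aux (hgc.comp (continuous_const.prodMk continuous_id))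
      · simp only [hL]; linarith
      · simp only [hXdef]; linarith
      · intro y hy
        apply hG τ y hτ0
        rcases hy with h | h
        · rw [abs_of_nonpos (by linarith)]; linarith
        · rw [abs_of_nonneg (by linarith)]; linarith
    have hWint : (∫ y in L..X, w₀ (y + t)) = ∫ y in (-a)..a, w₀ y := by
      rw [intervalIntegral.integral_comp_add_right w₀ t]
      apply trunc_aux hw₀c
      · simp only [hL]; linarith
      · simp only [hXdef]; linarith
      · intro y hy
        apply hW
        rcases hy with h | h
        · rw [abs_of_nonpos (by linarith)]; linarith
        · rw [abs_of_nonneg (by linarith)]; linarith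
    have hVint : (∫ y in L..X, v₀ (y - t)) = ∫ y in (-a)..a, v₀ y := by
      have e : (∫ y in L..X, v₀ (y - t)) = ∫ y in (L + (-t))..(X + (-t)), v₀ y := by
        simp_rw [sub_eq_add_neg]
        exact intervalIntegral.integral_comp_add_right v₀ (-t)
      rw [e]
      apply trunc_aux hv₀c
      · simp only [hL]; linarith
      · simp only [hXdef]; linarith
      · intro y hy
        apply hV
        rcases hy with h | h
        · rw [abs_of_nonpos (by linarith)]; linarith
        · rw [abs_of_nonneg (by linarith)]; linarith
    -- integrability of the pieces on [L, X]
    have hGwc : Continuous (fun y => ∫ τ in (0:ℝ)..t, g τ (y + t - τ)) := by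
      apply intervalIntegral.continuous_parametric_intervalIntegral_of_continuous'
        (f := fun y τ => g τ (y + t - τ))
      have hin : Continuous (fun p : ℝ × ℝ => ((p.2, p.1 + t - p.2) : ℝ × ℝ)) := by fun_prop
      exact hgc.comp hin
    have hGvc : Continuous (fun y => ∫ τ in (0:ℝ)..t, g τ (y - t + τ)) := by
      apply intervalIntegral.continuous_parametric_intervalIntegral_of_continuous'
        (f := fun y τ => g τ (y - t + τ))
      have hin : Continuous (fun p : ℝ × ℝ => ((p.2, p.1 - t + p.2) : ℝ × ℝ)) := by fun_prop
      exact hgc.comp hin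
    have hwXint : (∫ y in L..X, w t y)
        = (∫ y in (-a)..a, w₀ y) + ∫ τ in (0:ℝ)..t, ∫ z in (-(a + τ))..(a + τ), g τ z := by
      have e : (∫ y in L..X, w t y)
          = ∫ y in L..X, (w₀ (y + t) + ∫ τ in (0:ℝ)..t, g τ (y + t - τ)) :=
        intervalIntegral.integral_congr (fun y _ => hw t y)
      have iw1 : Continuous (fun y : ℝ => w₀ (y + t)) :=
        hw₀c.comp (continuous_id.add continuous_const)
      rw [e, intervalIntegral.integral_add
        (iw1.intervalIntegrable _ _)
        (hGwc.intervalIntegrable _ _), hWint, hGw]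
    have hvXint : (∫ y in L..X, v t y)
        = (∫ y in (-a)..a, v₀ y) + ∫ τ in (0:ℝ)..t, ∫ z in (-(a + τ))..(a + τ), g τ z := by
      have e : (∫ y in L..X, v t y)
          = ∫ y in L..X, (v₀ (y - t) + ∫ τ in (0:ℝ)..t, g τ (y - t + τ)) :=
        intervalIntegral.integral_congr (fun y _ => hv t y)
      have iv1 : Continuous (fun y : ℝ => v₀ (y - t)) :=
        hv₀c.comp (continuous_id.sub continuous_const)
      rw [e, intervalIntegral.integral_add
        (iv1.intervalIntegrable _ _)
        (hGvc.intervalIntegrable _ _), hVint, hGv]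
    -- from hint: ∫_{-a}^{a} (w₀ - v₀) = 0
    have hint' : (∫ y in (-a)..a, (w₀ y - v₀ y)) = 0 := by
      have e : (∫ y in (-a - T)..(a + T), (w₀ y - v₀ y) / 2)
          = ∫ y in (-a)..a, (w₀ y - v₀ y) / 2 := by
        apply trunc_aux (by fun_prop)
        · linarith
        · linarith
        · intro y hy
          have h1 : w₀ y = 0 := by
            apply hW
            rcases hy with h | h
            · rw [abs_of_nonpos (by linarith)]; linarith
            · rw [abs_of_nonneg (by linarith)]; linarith
          have h2 : v₀ y = 0 := by
            apply hV
            rcases hy with h | h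
            · rw [abs_of_nonpos (by linarith)]; linarith
            · rw [abs_of_nonneg (by linarith)]; linarith
          rw [h1, h2]; ring
      rw [e] at hint
      have h2 : (∫ y in (-a)..a, (w₀ y - v₀ y) / 2)
          = (∫ y in (-a)..a, (w₀ y - v₀ y)) / 2 :=
        intervalIntegral.integral_div (μ := volume) (a := -a) (b := a) (2:ℝ)
          (fun y => w₀ y - v₀ y)
      rw [h2] at hint
      linarith
    have hfinal : (∫ y in L..x, w t y - v t y) = 0 := by
      rw [hext, intervalIntegral.integral_sub (hwc.intervalIntegrable _ _)
        (hvc.intervalIntegrable _ _), hwXint, hvXint]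
      have h3 : (∫ y in (-a)..a, (w₀ y - v₀ y))
          = (∫ y in (-a)..a, w₀ y) - ∫ y in (-a)..a, v₀ y :=
        intervalIntegral.integral_sub (hw₀c.intervalIntegrable _ _)
          (hv₀c.intervalIntegrable _ _)
      rw [h3] at hint'
      linarith
    rw [intervalIntegral.integral_div]
    rw [hfinal]
    norm_num
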